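/- For each k ∈ ℕ, the function t_k : X → {0,…,2^k−1} is continuous, where {0,…,2^k−1} carries the discrete topology (equivalently, t_k is locally constant on X). -/

import Mathlib

/-- The substitution σ on symbols: σ(0) = 01, σ(1) = 10 (with 0 ↔ `false`, 1 ↔ `true`). -/
def sigmaSub (b : Bool) : List Bool := [b, !b]

/-- The substitution σ extended to words by concatenation. -/
def subst (w : List Bool) : List Bool := w.flatMap sigmaSub

/-- The flip of a binary word: exchange 0 and 1 in every position. -/
def flipWord (w : List Bool) : List Bool := w.map (fun b => !b)

/-- u_k = σ^k(0). -/
def uWord : ℕ → List Bool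
  | 0 => [false]
  | k + 1 => subst (uWord k)

/-- The Morse sequence: its first 2^k symbols form the word u_k for every k. -/
def morse (n : ℕ) : Bool := (uWord (n + 1)).getD n false

/-- The subword of `x` on the interval `[p, p + w.length)` is the word `w`. -/
def readsWord (x : ℤ → Bool) (p : ℤ) (w : List Bool) : Prop :=
  ∀ j : ℕ, j < w.length → x (p + j) = w.getD j false

/-- The Morse minimal set X: bi-infinite sequences all of whose finite subwords
occur in the Morse sequence. -/
def morseShiftX : Set (ℤ → Bool) :=
  {x | ∀ (a : ℤ) (l : ℕ), ∃ s : ℕ, ∀ j : ℕ, j < l → x (a + j) = morse (s + j)}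

/-- The left shift T. -/
def shiftT (x : ℤ → Bool) : ℤ → Bool := fun i => x (i + 1)

/-- `hasOffset k x i`: coordinate 0 occupies position `i` in its interval, i.e. on every
interval `[-i + m·2^k, -i + (m+1)·2^k)` the sequence `x` reads u_k or its flip. -/
def hasOffset (k : ℕ) (x : ℤ → Bool) (i : ℕ) : Prop :=
  ∀ m : ℤ, readsWord x (-(i : ℤ) + m * 2 ^ k) (uWord k) ∨
    readsWord x (-(i : ℤ) + m * 2 ^ k) (flipWord (uWord k))

/-- The k-canonical cylinders: `cyl k false i` is u_k(i), `cyl k true i` is ū_k(i). -/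
def cyl (k : ℕ) (b : Bool) (i : ℕ) : Set {x : ℤ → Bool // x ∈ morseShiftX} :=
  {x | hasOffset k x.val i ∧
    x.val 0 = (if b then flipWord (uWord k) else uWord k).getD i false}

/-! The offset is unique because the Morse substitution is recognizable. Two distinct offsets
in `[0, 2^k)` agree modulo `2^j` and differ modulo `2^(j+1)` for some `j < k`, giving
`(j+1)`-offsets `r` and `r + 2^j`. Since `u_(j+1) = u_j ū_j`, the two block decompositions
together force `x` to flip at every step along an arithmetic progression of difference `2^j`.
Five such values form a subword of the Morse sequence, and repeatedly undoing `σ` turns it into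
three equal consecutive letters, which `m` never contains. So each fiber of `t_k` is the set of
sequences with a given offset, a closed condition on the coordinates, and a map with finitely
many closed fibers is locally constant. -/

lemma length_subst (w : List Bool) : (subst w).length = 2 * w.length := by
  induction w with
  | nil => rfl
  | cons a w ih => simp [subst, sigmaSub] at ih ⊢; omega

lemma length_flipWord (w : List Bool) : (flipWord w).length = w.length :=
  List.length_map _

lemma length_uWord (k : ℕ) : (uWord k).length = 2 ^ k := by
  induction k with
  | zero => rfl
  | succ k ih => rw [uWord, length_subst, ih, pow_succ, mul_comm]

lemma flipWord_flipWord (w : List Bool) : flipWord (flipWord w) = w := by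
  simp [flipWord, Function.comp_def]

lemma flipWord_append (w₁ w₂ : List Bool) :
    flipWord (w₁ ++ w₂) = flipWord w₁ ++ flipWord w₂ :=
  List.map_append

lemma subst_append (w₁ w₂ : List Bool) : subst (w₁ ++ w₂) = subst w₁ ++ subst w₂ :=
  List.flatMap_append

lemma subst_flipWord (w : List Bool) : subst (flipWord w) = flipWord (subst w) := by
  induction w with
  | nil => rfl
  | cons a w ih => simpa [subst, sigmaSub, flipWord] using ih

lemma uWord_succ (k : ℕ) : uWord (k + 1) = uWord k ++ flipWord (uWord k) := by
  induction k with
  | zero => rfl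
  | succ k ih => rw [uWord, ih, subst_append, subst_flipWord, ← uWord, ih]

lemma getD_flipWord {w : List Bool} {n : ℕ} (h : n < w.length) :
    (flipWord w).getD n false = !w.getD n false := by
  simp [flipWord, h]

lemma getD_subst_two_mul {w : List Bool} {n : ℕ} (h : n < w.length) :
    (subst w).getD (2 * n) false = w.getD n false := by
  induction w generalizing n with
  | nil => simp at h
  | cons a w ih =>
    cases n with
    | zero => rfl
    | succ n => simpa [subst, sigmaSub, Nat.mul_succ] using ih (n := n) (by simpa using h)

lemma getD_subst_two_mul_add_one {w : List Bool} {n : ℕ} (h : n < w.length) :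
    (subst w).getD (2 * n + 1) false = !w.getD n false := by
  induction w generalizing n with
  | nil => simp at h
  | cons a w ih =>
    cases n with
    | zero => rfl
    | succ n => simpa [subst, sigmaSub, Nat.mul_succ] using ih (n := n) (by simpa using h)

lemma uWord_prefix {k k' : ℕ} (h : k ≤ k') : uWord k <+: uWord k' := by
  induction k', h using Nat.le_induction with
  | base => exact List.prefix_refl _
  | succ k' _ ih => exact ih.trans (uWord_succ k' ▸ List.prefix_append _ _)

lemma getD_uWord_zero (k : ℕ) : (uWord k).getD 0 false = false := by
  induction k with
  | zero => rfl
  | succ k ih => rwa [uWord_succ, List.getD_append _ _ _ _ (by simp [length_uWord])]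

lemma getD_uWord_succ_two_pow (k : ℕ) : (uWord (k + 1)).getD (2 ^ k) false = true := by
  rw [uWord_succ, List.getD_append_right _ _ _ _ (by rw [length_uWord]), length_uWord,
    Nat.sub_self, getD_flipWord (by simp [length_uWord]), getD_uWord_zero, Bool.not_false]

lemma getD_uWord_of_le {k k' n : ℕ} (hk : k ≤ k') (h : n < 2 ^ k) :
    (uWord k').getD n false = (uWord k).getD n false := by
  rw [← length_uWord] at h
  have h' := (uWord_prefix hk).length_le.trans_lt' h
  rw [List.getD_eq_getElem _ _ h, List.getD_eq_getElem _ _ h', (uWord_prefix hk).getElem h]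

lemma morse_eq_getD_uWord {k n : ℕ} (h : n < 2 ^ k) : morse n = (uWord k).getD n false := by
  rcases le_total k (n + 1) with hk | hk
  · exact getD_uWord_of_le hk h
  · exact (getD_uWord_of_le hk (Nat.lt_two_pow_self.trans (Nat.pow_lt_pow_succ one_lt_two))).symm

lemma morse_two_mul (n : ℕ) : morse (2 * n) = morse n := by
  have hn : n < 2 ^ n := Nat.lt_two_pow_self
  rw [morse_eq_getD_uWord (k := n + 1) (by rw [pow_succ]; omega), morse_eq_getD_uWord hn, uWord,
    getD_subst_two_mul (by rwa [length_uWord])]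

lemma morse_two_mul_add_one (n : ℕ) : morse (2 * n + 1) = !morse n := by
  have hn : n < 2 ^ n := Nat.lt_two_pow_self
  rw [morse_eq_getD_uWord (k := n + 1) (by rw [pow_succ]; omega), morse_eq_getD_uWord hn, uWord,
    getD_subst_two_mul_add_one (by rwa [length_uWord])]

lemma exists_morse_add_two_mul (s : ℕ) :
    ∃ q c, ∀ n, morse (s + 2 * n) = (c ^^ morse (q + n)) := by
  rcases Nat.even_or_odd' s with ⟨q, rfl | rfl⟩
  · exact ⟨q, false, fun n => by rw [← mul_add, morse_two_mul, Bool.false_xor]⟩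
  · refine ⟨q, true, fun n => ?_⟩
    rw [add_right_comm, ← mul_add, morse_two_mul_add_one, Bool.true_xor]

lemma morse_not_three_eq (q : ℕ) :
    ¬ (morse q = morse (q + 1) ∧ morse (q + 1) = morse (q + 2)) := by
  rintro ⟨h₁, h₂⟩
  rcases Nat.even_or_odd' q with ⟨m, rfl | rfl⟩
  · simp [morse_two_mul, morse_two_mul_add_one] at h₁
  · rw [show 2 * m + 1 + 1 = 2 * (m + 1) by ring, show 2 * m + 1 + 2 = 2 * (m + 1) + 1 by ring,
      morse_two_mul, morse_two_mul_add_one] at h₂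
    simp at h₂

lemma morse_not_alternating (k s : ℕ) :
    ¬ ∀ t < 4, morse (s + (t + 1) * 2 ^ k) = !morse (s + t * 2 ^ k) := by
  induction k generalizing s with
  | zero =>
    intro H
    simp only [pow_zero, mul_one] at H
    obtain ⟨q, c, hqc⟩ := exists_morse_add_two_mul s
    have step (n : ℕ) (hn : n < 2) : morse (q + (n + 1)) = morse (q + n) := by
      rw [← Bool.xor_right_inj (x := c), ← hqc, ← hqc,
        show s + 2 * (n + 1) = s + (2 * n + 1 + 1) by ring, H _ (by omega), H _ (by omega),
        Bool.not_not]
    exact morse_not_three_eq q ⟨(step 0 (by norm_num)).symm, (step 1 (by norm_num)).symm⟩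
  | succ k ih =>
    intro H
    obtain ⟨q, c, hqc⟩ := exists_morse_add_two_mul s
    refine ih q fun t ht => ?_
    have two_mul_scale (t : ℕ) : s + t * 2 ^ (k + 1) = s + 2 * (t * 2 ^ k) := by ring
    have := H t ht
    rwa [two_mul_scale, two_mul_scale, hqc, hqc, ← Bool.xor_not, Bool.xor_right_inj] at this

lemma Nat.eq_mod_or_eq_mod_add_of_lt_two_mul {l N : ℕ} (h : l < 2 * N) :
    l = l % N ∨ l = l % N + N := by
  rcases lt_or_ge l N with hl | hl
  · exact .inl (Nat.mod_eq_of_lt hl).symm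
  · right
    rw [Nat.mod_eq_sub_mod hl, Nat.mod_eq_of_lt (by omega)]
    omega

section Offsets

variable {x : ℤ → Bool}

lemma readsWord_append_left {p : ℤ} {w₁ w₂ : List Bool} (h : readsWord x p (w₁ ++ w₂)) :
    readsWord x p w₁ := by
  intro j hj
  rw [h j (by simp; omega), List.getD_append _ _ _ _ hj]

lemma readsWord_append_right {p : ℤ} {w₁ w₂ : List Bool} (h : readsWord x p (w₁ ++ w₂)) :
    readsWord x (p + w₁.length) w₂ := by
  intro j hj
  have := h (w₁.length + j) (by simp; omega)
  rwa [List.getD_append_right _ _ _ _ (by omega), Nat.add_sub_cancel_left, Nat.cast_add,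
    ← add_assoc] at this

lemma eq_not_of_readsWord_uWord_succ {p : ℤ} {k : ℕ}
    (h : readsWord x p (uWord (k + 1)) ∨ readsWord x p (flipWord (uWord (k + 1)))) :
    x (p + 2 ^ k) = !x p := by
  have hlen : 2 ^ k < (uWord (k + 1)).length := by
    rw [length_uWord]; exact Nat.pow_lt_pow_succ one_lt_two
  have of_reads {w : List Bool} (hw : readsWord x p w) (hlen : 2 ^ k < w.length)
      (hflip : w.getD (2 ^ k) false = !w.getD 0 false) : x (p + 2 ^ k) = !x p := by
    have h₀ := hw 0 ((Nat.zero_le _).trans_lt hlen)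
    have h₁ := hw (2 ^ k) hlen
    push_cast at h₀ h₁
    rw [add_zero] at h₀
    rw [h₀, h₁, hflip]
  rcases h with h | h
  · exact of_reads h hlen (by rw [getD_uWord_zero, getD_uWord_succ_two_pow, Bool.not_false])
  · refine of_reads h (by rwa [length_flipWord]) ?_
    rw [getD_flipWord hlen, getD_flipWord ((Nat.zero_le _).trans_lt hlen), getD_uWord_zero,
      getD_uWord_succ_two_pow]
    rfl

lemma hasOffset_of_succ {k i : ℕ} (h : hasOffset (k + 1) x i) : hasOffset k x i := by
  intro m
  rcases Int.even_or_odd' m with ⟨n, rfl | rfl⟩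
  · rw [show -(i : ℤ) + 2 * n * 2 ^ k = -i + n * 2 ^ (k + 1) by ring]
    rcases h n with hr | hr
    · rw [uWord_succ] at hr
      exact .inl (readsWord_append_left hr)
    · rw [uWord_succ, flipWord_append] at hr
      exact .inr (readsWord_append_left hr)
  · rw [show -(i : ℤ) + (2 * n + 1) * 2 ^ k = -i + n * 2 ^ (k + 1) + (uWord k).length by
      rw [length_uWord]; push_cast; ring]
    rcases h n with hr | hr
    · rw [uWord_succ] at hr
      exact .inr (readsWord_append_right hr)
    · rw [uWord_succ, flipWord_append, flipWord_flipWord] at hr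
      exact .inl (length_flipWord (uWord k) ▸ readsWord_append_right hr)

lemma hasOffset_mod {k i : ℕ} (h : hasOffset k x i) : hasOffset k x (i % 2 ^ k) := by
  intro m
  have hi : (i : ℤ) = (i % 2 ^ k : ℕ) + (i / 2 ^ k : ℕ) * 2 ^ k := by
    exact_mod_cast (Nat.mod_add_div' i (2 ^ k)).symm
  rw [show -((i % 2 ^ k : ℕ) : ℤ) + m * 2 ^ k = -i + (m + (i / 2 ^ k : ℕ)) * 2 ^ k by
    rw [hi]; ring]
  exact h _

lemma not_alternating_of_mem_morseShiftX (hx : x ∈ morseShiftX) (p : ℤ) (k : ℕ) :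
    ¬ ∀ t : ℕ, t < 4 → x (p + (t + 1) * 2 ^ k) = !x (p + t * 2 ^ k) := by
  intro H
  obtain ⟨s, hs⟩ := hx p (4 * 2 ^ k + 1)
  refine morse_not_alternating k s fun t ht => ?_
  have hle : (t + 1) * 2 ^ k ≤ 4 * 2 ^ k := Nat.mul_le_mul_right _ ht
  have hle' : t * 2 ^ k ≤ (t + 1) * 2 ^ k := Nat.mul_le_mul_right _ t.le_succ
  rw [← hs _ (by omega), ← hs _ (by omega)]
  exact_mod_cast H t ht

lemma not_hasOffset_succ_add_two_pow (hx : x ∈ morseShiftX) {k r : ℕ}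
    (h : hasOffset (k + 1) x r) : ¬ hasOffset (k + 1) x (r + 2 ^ k) := by
  intro h'
  refine not_alternating_of_mem_morseShiftX hx (-r) k fun t _ => ?_
  rcases Nat.even_or_odd' t with ⟨n, rfl | rfl⟩
  · have := eq_not_of_readsWord_uWord_succ (h n)
    push_cast
    rwa [show -(r : ℤ) + 2 * n * 2 ^ k = -r + n * 2 ^ (k + 1) by ring,
      show -(r : ℤ) + (2 * n + 1) * 2 ^ k = -r + n * 2 ^ (k + 1) + 2 ^ k by ring]
  · have := eq_not_of_readsWord_uWord_succ (h' (n + 1))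
    push_cast at this ⊢
    rwa [show -(r : ℤ) + (2 * n + 1) * 2 ^ k = -(r + 2 ^ k) + (n + 1) * 2 ^ (k + 1) by ring,
      show -(r : ℤ) + (2 * n + 1 + 1) * 2 ^ k =
        -(r + 2 ^ k) + (n + 1) * 2 ^ (k + 1) + 2 ^ k by ring]

lemma hasOffset_unique (hx : x ∈ morseShiftX) {k i j : ℕ} (hi : i < 2 ^ k) (hj : j < 2 ^ k)
    (hoi : hasOffset k x i) (hoj : hasOffset k x j) : i = j := by
  induction k generalizing i j with
  | zero => omega
  | succ k ih =>
    have hmod : i % 2 ^ k = j % 2 ^ k :=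
      ih (Nat.mod_lt _ (by positivity)) (Nat.mod_lt _ (by positivity))
        (hasOffset_mod (hasOffset_of_succ hoi)) (hasOffset_mod (hasOffset_of_succ hoj))
    rw [pow_succ, mul_comm] at hi hj
    rcases Nat.eq_mod_or_eq_mod_add_of_lt_two_mul hi with hi' | hi' <;>
      rcases Nat.eq_mod_or_eq_mod_add_of_lt_two_mul hj with hj' | hj'
    · omega
    · exact absurd (show j = i + 2 ^ k by omega ▸ hoj) (not_hasOffset_succ_add_two_pow hx hoi)
    · exact absurd (show i = j + 2 ^ k by omega ▸ hoi) (not_hasOffset_succ_add_two_pow hx hoj)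
    · omega

end Offsets

lemma isClosed_setOf_readsWord (p : ℤ) (w : List Bool) :
    IsClosed {x : ℤ → Bool | readsWord x p w} := by
  simp only [readsWord, Set.ofPred_forall]
  exact isClosed_iInter fun j => isClosed_iInter fun _ =>
    isClosed_eq (continuous_apply _) continuous_const

lemma isClosed_setOf_hasOffset (k i : ℕ) : IsClosed {x : ℤ → Bool | hasOffset k x i} := by
  simp only [hasOffset, Set.ofPred_forall, Set.ofPred_or]
  exact isClosed_iInter fun m =>
    (isClosed_setOf_readsWord _ _).union (isClosed_setOf_readsWord _ _)

lemma IsLocallyConstant.of_isClosed_fiber {X Y : Type*} [TopologicalSpace X] {f : X → Y}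
    (hfin : (Set.range f).Finite) (hf : ∀ y, IsClosed (f ⁻¹' {y})) : IsLocallyConstant f := by
  refine IsLocallyConstant.iff_isOpen_fiber.mpr fun y => ?_
  rw [← isClosed_compl_iff, ← Set.preimage_compl, ← Set.preimage_inter_range,
    ← Set.biUnion_preimage_singleton]
  exact (hfin.subset Set.inter_subset_right).isClosed_biUnion fun z _ => hf z

/-- Any function t_k : X → {0,…,2^k−1} satisfying the defining property of the position
of coordinate 0 in its interval is locally constant (equivalently, continuous for the
discrete topology on its range). -/
theorem morse_tk_locally_constant (k : ℕ)
    (t : {x : ℤ → Bool // x ∈ morseShiftX} → ℕ)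
    (ht : ∀ x, t x < 2 ^ k ∧ hasOffset k x.val (t x)) :
    IsLocallyConstant t := by
  refine .of_isClosed_fiber ((Set.finite_Iio (2 ^ k)).subset ?_) fun i => ?_
  · rintro _ ⟨x, rfl⟩
    exact (ht x).1
  · have hfiber : t ⁻¹' {i} = {x | i < 2 ^ k ∧ hasOffset k x.val i} := by
      ext x
      refine ⟨fun hx => hx ▸ ht x, fun ⟨hi, hxi⟩ => ?_⟩
      exact hasOffset_unique x.prop (ht x).1 hi (ht x).2 hxi
    rw [hfiber, Set.ofPred_and]
    exact isClosed_const.inter ((isClosed_setOf_hasOffset k i).preimage continuous_subtype_val)
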